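/- For the Korányi ball Σ = {(x,y,z) : (x²+y²)² + 16z² = R⁴} in the Heisenberg group, at every non-characteristic point the horizontal mean curvature equals k₀ = 3√(x²+y²)/R², and the characteristic points are (0,0,±R²/4). -/

import Mathlib

noncomputable section

abbrev E3 := ℝ × ℝ × ℝ

def XH (p : E3) : E3 := (1, 0, -p.2.1 / 2)

def YH (p : E3) : E3 := (0, 1, p.1 / 2)

/-- The defining function of the Korányi ball of radius R. -/
def kor (R : ℝ) (p : E3) : ℝ := (p.1 ^ 2 + p.2.1 ^ 2) ^ 2 + 16 * p.2.2 ^ 2 - R ^ 4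

def Xu (R : ℝ) (p : E3) : ℝ := fderiv ℝ (kor R) p (XH p)

def Yu (R : ℝ) (p : E3) : ℝ := fderiv ℝ (kor R) p (YH p)

/-- |𝒳u| for the Korányi ball. -/
def nrm (R : ℝ) (p : E3) : ℝ := Real.sqrt (Xu R p ^ 2 + Yu R p ^ 2)

/-- Horizontal mean curvature k₀ = X(Xu/|𝒳u|) + Y(Yu/|𝒳u|). -/
def k0 (R : ℝ) (p : E3) : ℝ :=
  fderiv ℝ (fun q => Xu R q / nrm R q) p (XH p)
    + fderiv ℝ (fun q => Yu R q / nrm R q) p (YH p)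

/-!
With `r² = x² + y²`, the horizontal gradient of `u` is `Xu = 4x r² - 16yz`, `Yu = 4y r² + 16xz`.
Its horizontal derivatives are `X Xu = Y Yu = 12 r²` and `X Yu = -Y Xu = 16z`, a conformal matrix
`12 r² I + 16z J`; for such a field the divergence of `𝒳u / |𝒳u|` collapses to `12 r² / |𝒳u|`.
Since `|𝒳u|² = 16 r² ((x² + y²)² + 16z²) = 16 r² R⁴` on `Σ`, this is `3r / R²`.
The identity `x Xu + y Yu = 4 r⁴` shows that the characteristic points are those with `r = 0`.
-/

open ContinuousLinearMap

section Normalize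

variable {E : Type*} [NormedAddCommGroup E] [NormedSpace ℝ E]

theorem HasFDerivAt.div_sqrt {f S : E → ℝ} {f' S' : E →L[ℝ] ℝ} {p : E}
    (hf : HasFDerivAt f f' p) (hS : HasFDerivAt S S' p) (hpos : 0 < S p) :
    HasFDerivAt (fun q => f q / √(S q))
      ((√(S p))⁻¹ • f' - (f p / (2 * S p * √(S p))) • S') p := by
  have hsqrt : √(S p) ≠ 0 := (Real.sqrt_pos.2 hpos).ne'
  refine (hf.mul ((hasDerivAt_inv hsqrt).comp_hasFDerivAt p (hS.sqrt hpos.ne'))).congr_fderiv ?_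
  ext v
  simp only [add_apply, sub_apply, smul_apply, smul_eq_mul, Function.comp_apply,
    Real.sq_sqrt hpos.le]
  field_simp
  ring

/-- If the differential of `(f, g)` maps the frame `(v, w)` by a conformal matrix `a I + b J`,
the normalized field `(f, g) / |(f, g)|` has divergence `a / |(f, g)|` along that frame. -/
theorem fderiv_div_sqrt_add_fderiv_div_sqrt_of_conformal {f g : E → ℝ} {f' g' : E →L[ℝ] ℝ}
    {p v w : E} {a b : ℝ} (hf : HasFDerivAt f f' p) (hg : HasFDerivAt g g' p)
    (hfv : f' v = a) (hgv : g' v = b) (hfw : f' w = -b) (hgw : g' w = a)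
    (hp : 0 < f p ^ 2 + g p ^ 2) :
    fderiv ℝ (fun q => f q / √(f q ^ 2 + g q ^ 2)) p v
      + fderiv ℝ (fun q => g q / √(f q ^ 2 + g q ^ 2)) p w = a / √(f p ^ 2 + g p ^ 2) := by
  have hS := (hf.pow 2).fun_add (hg.pow 2)
  rw [(hf.div_sqrt hS hp).fderiv, (hg.div_sqrt hS hp).fderiv]
  simp only [add_apply, sub_apply, smul_apply, smul_eq_mul, hfv, hgv, hfw, hgw]
  have hN : √(f p ^ 2 + g p ^ 2) ≠ 0 := (Real.sqrt_pos.2 hp).ne'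
  field_simp
  ring

end Normalize

def gradCLM (a b c : ℝ) : E3 →L[ℝ] ℝ :=
  a • fst ℝ ℝ (ℝ × ℝ) + b • (fst ℝ ℝ ℝ ∘L snd ℝ ℝ (ℝ × ℝ)) + c • (snd ℝ ℝ ℝ ∘L snd ℝ ℝ (ℝ × ℝ))

@[simp]
theorem gradCLM_apply (a b c : ℝ) (v : E3) : gradCLM a b c v = a * v.1 + b * v.2.1 + c * v.2.2 := by
  simp [gradCLM]

section Coordinates

variable (p : E3)

theorem hasFDerivAt_coord₁ : HasFDerivAt (fun q : E3 => q.1) (gradCLM 1 0 0) p :=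
  hasFDerivAt_fst.congr_fderiv (by ext <;> simp)

theorem hasFDerivAt_coord₂ : HasFDerivAt (fun q : E3 => q.2.1) (gradCLM 0 1 0) p :=
  (hasFDerivAt_fst.comp p hasFDerivAt_snd).congr_fderiv (by ext <;> simp)

theorem hasFDerivAt_coord₃ : HasFDerivAt (fun q : E3 => q.2.2) (gradCLM 0 0 1) p :=
  (hasFDerivAt_snd.comp p hasFDerivAt_snd).congr_fderiv (by ext <;> simp)

end Coordinates

section Koranyi

variable (R : ℝ) (p : E3)

theorem hasFDerivAt_kor :
    HasFDerivAt (kor R) (gradCLM (4 * p.1 * (p.1 ^ 2 + p.2.1 ^ 2))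
      (4 * p.2.1 * (p.1 ^ 2 + p.2.1 ^ 2)) (32 * p.2.2)) p := by
  have hr := ((hasFDerivAt_coord₁ p).pow 2).fun_add ((hasFDerivAt_coord₂ p).pow 2)
  refine (((hr.pow 2).fun_add (((hasFDerivAt_coord₃ p).pow 2).const_mul 16)).sub_const
    (R ^ 4)).congr_fderiv ?_
  ext <;> simp <;> ring

theorem Xu_eq : Xu R p = 4 * p.1 * (p.1 ^ 2 + p.2.1 ^ 2) - 16 * p.2.1 * p.2.2 := by
  rw [Xu, (hasFDerivAt_kor R p).fderiv]
  simp [XH]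
  ring

theorem Yu_eq : Yu R p = 4 * p.2.1 * (p.1 ^ 2 + p.2.1 ^ 2) + 16 * p.1 * p.2.2 := by
  rw [Yu, (hasFDerivAt_kor R p).fderiv]
  simp [YH]
  ring

theorem hasFDerivAt_Xu :
    HasFDerivAt (Xu R) (gradCLM (12 * p.1 ^ 2 + 4 * p.2.1 ^ 2) (8 * p.1 * p.2.1 - 16 * p.2.2)
      (-16 * p.2.1)) p := by
  rw [show Xu R = _ from funext (Xu_eq R)]
  refine ((((hasFDerivAt_coord₁ p).const_mul 4).mul (((hasFDerivAt_coord₁ p).pow 2).fun_add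
    ((hasFDerivAt_coord₂ p).pow 2))).sub
    (((hasFDerivAt_coord₂ p).const_mul 16).mul (hasFDerivAt_coord₃ p))).congr_fderiv ?_
  ext <;> simp <;> ring

theorem hasFDerivAt_Yu :
    HasFDerivAt (Yu R) (gradCLM (8 * p.1 * p.2.1 + 16 * p.2.2) (4 * p.1 ^ 2 + 12 * p.2.1 ^ 2)
      (16 * p.1)) p := by
  rw [show Yu R = _ from funext (Yu_eq R)]
  refine ((((hasFDerivAt_coord₂ p).const_mul 4).mul (((hasFDerivAt_coord₁ p).pow 2).fun_add
    ((hasFDerivAt_coord₂ p).pow 2))).add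
    (((hasFDerivAt_coord₁ p).const_mul 16).mul (hasFDerivAt_coord₃ p))).congr_fderiv ?_
  ext <;> simp <;> ring

theorem Xu_sq_add_Yu_sq : Xu R p ^ 2 + Yu R p ^ 2
    = 16 * (p.1 ^ 2 + p.2.1 ^ 2) * ((p.1 ^ 2 + p.2.1 ^ 2) ^ 2 + 16 * p.2.2 ^ 2) := by
  rw [Xu_eq, Yu_eq]
  ring

theorem Xu_eq_zero_and_Yu_eq_zero_iff : Xu R p = 0 ∧ Yu R p = 0 ↔ p.1 = 0 ∧ p.2.1 = 0 := by
  constructor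
  · rintro ⟨hX, hY⟩
    have hr : (p.1 ^ 2 + p.2.1 ^ 2) ^ 2 = 0 := by
      linear_combination (p.1 * (hX - Xu_eq R p) + p.2.1 * (hY - Yu_eq R p)) / 4
    have hr2 : p.1 ^ 2 + p.2.1 ^ 2 = 0 := pow_eq_zero_iff two_ne_zero |>.1 hr
    exact ⟨by nlinarith, by nlinarith⟩
  · rintro ⟨hx, hy⟩
    simp [Xu_eq, Yu_eq, hx, hy]

theorem k0_eq_of_not_characteristic (h : ¬(Xu R p = 0 ∧ Yu R p = 0)) :
    k0 R p = 3 * √(p.1 ^ 2 + p.2.1 ^ 2) / √((p.1 ^ 2 + p.2.1 ^ 2) ^ 2 + 16 * p.2.2 ^ 2) := by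
  have hpos : 0 < Xu R p ^ 2 + Yu R p ^ 2 := by
    rcases not_and_or.1 h with h | h <;> positivity
  have hdiv := fderiv_div_sqrt_add_fderiv_div_sqrt_of_conformal (hasFDerivAt_Xu R p)
    (hasFDerivAt_Yu R p) (v := XH p) (w := YH p) (a := 12 * (p.1 ^ 2 + p.2.1 ^ 2)) (b := 16 * p.2.2)
    (by simp [XH]; ring) (by simp [XH]; ring) (by simp [YH]; ring) (by simp [YH]; ring) hpos
  unfold k0 nrm
  rw [hdiv, Xu_sq_add_Yu_sq]
  obtain ⟨s, hs, hr⟩ : ∃ s, 0 ≤ s ∧ p.1 ^ 2 + p.2.1 ^ 2 = s ^ 2 :=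
    ⟨_, Real.sqrt_nonneg _, (Real.sq_sqrt (by positivity)).symm⟩
  rw [hr, Real.sqrt_sq hs, show 16 * s ^ 2 = (4 * s) ^ 2 by ring,
    Real.sqrt_mul (by positivity), Real.sqrt_sq (by positivity)]
  rcases hs.eq_or_lt with rfl | hs
  · simp
  · field_simp
    ring

end Koranyi

theorem koranyi_ball_curvature_general (R : ℝ) :
    (∀ p : E3, kor R p = 0 → ¬(Xu R p = 0 ∧ Yu R p = 0) →
      k0 R p = 3 * Real.sqrt (p.1 ^ 2 + p.2.1 ^ 2) / R ^ 2) ∧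
    {p : E3 | kor R p = 0 ∧ Xu R p = 0 ∧ Yu R p = 0} =
      {((0:ℝ), (0:ℝ), R ^ 2 / 4), ((0:ℝ), (0:ℝ), -(R ^ 2 / 4))} := by
  constructor
  · intro p hp hnc
    have hgauge : (p.1 ^ 2 + p.2.1 ^ 2) ^ 2 + 16 * p.2.2 ^ 2 = (R ^ 2) ^ 2 := by
      rw [kor] at hp
      linear_combination hp
    rw [k0_eq_of_not_characteristic R p hnc, hgauge, Real.sqrt_sq (sq_nonneg R)]
  · ext ⟨x, y, z⟩
    simp only [Set.mem_ofPred_eq, Xu_eq_zero_and_Yu_eq_zero_iff, Set.mem_insert_iff,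
      Set.mem_singleton_iff, Prod.mk.injEq, kor]
    constructor
    · rintro ⟨hk, rfl, rfl⟩
      have hz : (z - R ^ 2 / 4) * (z + R ^ 2 / 4) = 0 := by linear_combination hk / 16
      rcases mul_eq_zero.1 hz with hz | hz
      · exact .inl ⟨rfl, rfl, by linear_combination hz⟩
      · exact .inr ⟨rfl, rfl, by linear_combination hz⟩
    · rintro (⟨rfl, rfl, rfl⟩ | ⟨rfl, rfl, rfl⟩) <;> refine ⟨?_, rfl, rfl⟩ <;> ring

/-- For the Korányi ball {(x²+y²)² + 16z² = R⁴} in the Heisenberg group, at every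
non-characteristic point the horizontal mean curvature equals 3√(x²+y²)/R², and
the characteristic points are (0,0,±R²/4). -/
theorem koranyi_ball_curvature (R : ℝ) (hR : 0 < R) :
    (∀ p : E3, kor R p = 0 → ¬(Xu R p = 0 ∧ Yu R p = 0) →
      k0 R p = 3 * Real.sqrt (p.1 ^ 2 + p.2.1 ^ 2) / R ^ 2) ∧
    {p : E3 | kor R p = 0 ∧ Xu R p = 0 ∧ Yu R p = 0} =
      {((0:ℝ), (0:ℝ), R ^ 2 / 4), ((0:ℝ), (0:ℝ), -(R ^ 2 / 4))} :=
  koranyi_ball_curvature_general R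

end
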